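/- arXiv:1110.0651 — 2 statements merged into one kernel-verified Lean document; each statement's English description precedes it below -/
import Mathlib

section
/- Let A be a commutative unital algebra over k and P(k) an operad acting on A compatibly (A is an Ass⁺ ⊗ P-algebra). The diagonal P-action on the simplicial object A_• with A_p = A^{⊗(p+1)}, where p ∈ P(k) acts on k-tuples of simplices after applying Eilenberg–Zilber shuffles with units inserted, commutes with the simplicial face and degeneracy maps; hence it induces a P-algebra structure on the Hochschild complex C_*(A). -/
/-!
STATEMENT 16: Let `A` be a commutative unital algebra over `k` which is an
`Ass⁺ ⊗ P`-algebra for an operad `P`, i.e. each `p ∈ P(r)` acts by an operation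
`A^r → A` which is multiplicative (interchange with the associative product) and
unital.  Then the diagonal `P`-action on the cyclic bar construction `A_•`
(`A_m = A^{⊗(m+1)}`, with `p` acting slotwise) commutes with all simplicial face and
degeneracy maps; hence it induces a `P`-algebra structure on the Hochschild
complex `C_*(A)`.
-/

open scoped TensorProduct
open PiTensorProduct

variable (k A : Type*) [CommRing k] [CommRing A] [Algebra k A]

/-- Inner face maps of the cyclic bar construction, on tuples:
`d_i` multiplies the entries in positions `i` and `i+1`. -/
def faceMap (n : ℕ) (i : Fin (n + 1)) (f : Fin (n + 2) → A) : Fin (n + 1) → A :=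
  fun j => if j.val < i.val then f j.castSucc
    else if j = i then f j.castSucc * f j.succ
    else f j.succ

/-- The last (cyclic) face map `d_{n+1}(a₀,…,a_{n+1}) = (a_{n+1}a₀, a₁,…,a_n)`. -/
def lastFaceMap (n : ℕ) (f : Fin (n + 2) → A) : Fin (n + 1) → A :=
  fun j => if j = 0 then f (Fin.last (n + 1)) * f 0 else f j.castSucc

/-- Degeneracy maps: `s_i` inserts the unit `1` in position `i+1`. -/
def degenMap (n : ℕ) (i : Fin (n + 1)) (f : Fin (n + 1) → A) : Fin (n + 2) → A :=
  (i.succ).insertNth (1 : A) f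

/-- The diagonal action of a `r`-ary operation on a `r`-tuple of `m`-simplices. -/
def diagAct {P : ℕ → Type*} (act : ∀ r, P r → (Fin r → A) → A)
    (r m : ℕ) (p : P r) (x : Fin r → Fin (m + 1) → A) : Fin (m + 1) → A :=
  fun i => act r p (fun j => x j i)


section Aux

open MultilinearMap

variable {k A : Type*} [CommRing k] [CommRing A] [Algebra k A] {ι : Type*}

/-- Evaluation of a 0-multilinear map, as a linear map. -/
def ev0 : MultilinearMap k (fun _ : Fin 0 => A) A →ₗ[k] A where
  toFun f := f 0
  map_add' _ _ := rfl
  map_smul' _ _ := rfl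

/-- Constant multilinear map on an empty index, as a linear map. -/
def cst0 (B : Type*) [AddCommMonoid B] [Module k B] :
    B →ₗ[k] MultilinearMap k (fun _ : Fin 0 => B) B where
  toFun b := MultilinearMap.constOfIsEmpty k _ b
  map_add' _ _ := rfl
  map_smul' _ _ := rfl

/-- The nested lifting map: from a tensor (over `ι`) of `r`-multilinear operations on `A`,
produce an `r`-multilinear operation on `⨂[k] _ : ι, A`. -/
noncomputable def Phi :
    (r : ℕ) → (⨂[k] _ : ι, MultilinearMap k (fun _ : Fin r => A) A) →ₗ[k]
      MultilinearMap k (fun _ : Fin r => (⨂[k] _ : ι, A)) (⨂[k] _ : ι, A)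
  | 0 => (cst0 _).comp (PiTensorProduct.map fun _ => (ev0 : _ →ₗ[k] A))
  | (r + 1) =>
      ((multilinearCurryLeftEquiv k (fun _ : Fin (r + 1) => (⨂[k] _ : ι, A))
          (⨂[k] _ : ι, A)).symm.toLinearMap).comp <|
        ((LinearMap.llcomp k (⨂[k] _ : ι, A) _ _ (Phi r)).comp
          (PiTensorProduct.piTensorHomMap (R := k))).comp
          (PiTensorProduct.map fun _ =>
            (multilinearCurryLeftEquiv k (fun _ : Fin (r + 1) => A) A).toLinearMap)

theorem Phi_tprod : ∀ (r : ℕ) (N : ι → MultilinearMap k (fun _ : Fin r => A) A)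
    (x : Fin r → ι → A),
    Phi r (tprod k N) (fun j => tprod k (x j)) = tprod k (fun i => N i (fun j => x j i))
  | 0, N, x => by
    simp only [Phi, LinearMap.comp_apply, PiTensorProduct.map_tprod, cst0, ev0,
      LinearMap.coe_mk, AddHom.coe_mk, MultilinearMap.constOfIsEmpty_apply]
    exact congr_arg (⇑(PiTensorProduct.tprod k)) (funext fun i =>
      MultilinearMap.congr_arg (N i) (funext fun j => j.elim0))
  | (r + 1), N, x => by
    have h1 : (PiTensorProduct.map (fun _ : ι =>
        (multilinearCurryLeftEquiv k (fun _ : Fin (r + 1) => A) A).toLinearMap))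
          (tprod k N) = tprod k (fun i => (N i).curryLeft) := by
      rw [PiTensorProduct.map_tprod]; rfl
    simp only [Phi, LinearMap.comp_apply, h1, LinearEquiv.coe_coe]
    rw [show ((multilinearCurryLeftEquiv k (fun _ : Fin (r + 1) => (⨂[k] _ : ι, A))
        (⨂[k] _ : ι, A)).symm) ((LinearMap.llcomp k (⨂[k] _ : ι, A) _ _ (Phi r))
          ((PiTensorProduct.piTensorHomMap (R := k)) (tprod k (fun i => (N i).curryLeft))))
          (fun j => tprod k (x j)) =
        (Phi r) ((PiTensorProduct.piTensorHomMap (R := k))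
          (tprod k (fun i => (N i).curryLeft)) (tprod k (x 0)))
          (fun j : Fin r => tprod k (x j.succ)) from rfl]
    rw [PiTensorProduct.piTensorHomMap_tprod_tprod]
    rw [Phi_tprod r (fun i => (N i).curryLeft (x 0 i)) (fun j i => x j.succ i)]
    congr 1
    funext i
    simp only [MultilinearMap.curryLeft_apply]
    exact MultilinearMap.congr_arg (N i) (funext fun j => by
      refine Fin.cases ?_ (fun j => ?_) j <;> simp)

end Aux

theorem diagonal_operad_action_is_simplicial
    (P : ℕ → Type*) (act : ∀ r, P r → (Fin r → A) → A)
    -- multilinearity of the operations (they are chain operations):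
    (hmult : ∀ r (p : P r), ∃ M : MultilinearMap k (fun _ : Fin r => A) A,
      (M : (Fin r → A) → A) = act r p)
    -- the `Ass⁺ ⊗ P` interchange law and unitality:
    (hinter : ∀ r (p : P r) (a b : Fin r → A),
      act r p (fun j => a j * b j) = act r p a * act r p b)
    (hone : ∀ r (p : P r), act r p (fun _ => 1) = 1) :
    -- the diagonal action commutes with all faces and degeneracies …
    (∀ r (p : P r) (m : ℕ) (i : Fin (m + 1)) (x : Fin r → Fin (m + 2) → A),
      faceMap A m i (diagAct A act r (m + 1) p x) =
        diagAct A act r m p (fun j => faceMap A m i (x j))) ∧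
    (∀ r (p : P r) (m : ℕ) (x : Fin r → Fin (m + 2) → A),
      lastFaceMap A m (diagAct A act r (m + 1) p x) =
        diagAct A act r m p (fun j => lastFaceMap A m (x j))) ∧
    (∀ r (p : P r) (m : ℕ) (i : Fin (m + 1)) (x : Fin r → Fin (m + 1) → A),
      degenMap A m i (diagAct A act r m p x) =
        diagAct A act r (m + 1) p (fun j => degenMap A m i (x j))) ∧
    -- … hence it induces an operation on the Hochschild chains in each degree:
    (∀ r (p : P r) (m : ℕ),
      ∃ L : (⨂[k] _ : Fin r, (⨂[k] _ : Fin (m + 1), A)) →ₗ[k] ⨂[k] _ : Fin (m + 1), A,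
        ∀ x : Fin r → Fin (m + 1) → A,
          L (tprod k (fun j => tprod k (x j))) = tprod k (diagAct A act r m p x)) := by
  refine ⟨?_, ?_, ?_, ?_⟩
  · intro r p m i x
    funext j
    simp only [faceMap, diagAct]
    split_ifs with h1 h2
    · rfl
    · exact (hinter r p _ _).symm
    · rfl
  · intro r p m x
    funext j
    simp only [lastFaceMap, diagAct]
    split_ifs with h1
    · exact (hinter r p _ _).symm
    · rfl
  · intro r p m i x
    funext j
    simp only [degenMap, diagAct]
    refine Fin.succAboveCases i.succ ?_ (fun t => ?_) j
    · rw [Fin.insertNth_apply_same]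
      exact (hone r p).symm ▸ (by simp [hone r p])
    · simp only [Fin.insertNth_apply_succAbove]; rfl
  · intro r p m
    obtain ⟨M, hM⟩ := hmult r p
    refine ⟨PiTensorProduct.lift (Phi r (tprod k (fun _ : Fin (m + 1) => M))), fun x => ?_⟩
    rw [PiTensorProduct.lift.tprod, Phi_tprod]
    congr 1
    funext i
    show M (fun j => x j i) = _
    rw [hM]
    rfl
end

section
/- In the chain complex of black and white graphs with differential d̂(G) = Σ_{(G̃,e) : G ∈ G̃/e} G̃ summing over all blow-ups, one has d̂ ∘ d̂ = 0: for every graph Ĝ with two distinguished edges e, f whose successive collapses yield G, the orientations of Ĝ/f/e and Ĝ/e/f are opposite, so the terms (Ĝ, f, e) and (Ĝ, e, f) cancel. -/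
/-!
STATEMENT 17: In the chain complex of black and white graphs with differential given by
summing over all blow-ups, `d̂ ∘ d̂ = 0` because for every graph with two distinguished
edges `e = {h₁,h₂}` (with endpoints `v₁,v₂`) and `f = {h₃,h₄}` (with endpoints `v₃,v₄`)
the orientations induced on the two successive collapses `Ĝ/e/f` and `Ĝ/f/e` are
opposite.  Orientations are modelled as elements of the exterior algebra on the free
module over `V ⊔ H`; the collapse of `e` in a graph with orientation
`v₁ ∧ v₂ ∧ h₁ ∧ h₂ ∧ x` has induced orientation `w_e ∧ x`, where `w_e` is the merged
vertex and `x` lies in the subalgebra generated by the remaining basis elements.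
The theorem: collapsing `e` then `f` gives the opposite orientation to collapsing
`f` then `e`.
-/

open ExteriorAlgebra

noncomputable def basVec (k : Type*) [Field k] {ι : Type*} [DecidableEq ι] (i : ι) :
    ExteriorAlgebra k (ι →₀ k) :=
  ExteriorAlgebra.ι k (Finsupp.single i (1 : k))

/-- The subalgebra of the exterior algebra generated by the basis vectors indexed by
a subset `S` of the index set. -/
noncomputable def genSubalgebra (k : Type*) [Field k] {ι : Type*} [DecidableEq ι]
    (S : Set ι) : Subalgebra k (ExteriorAlgebra k (ι →₀ k)) :=
  Algebra.adjoin k ((fun i => basVec k i) '' S)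

section Aux

variable (k : Type*) [Field k] {ι : Type*} [DecidableEq ι]

lemma basVec_swap (i j : ι) : basVec k i * basVec k j = -(basVec k j * basVec k i) := by
  have := ExteriorAlgebra.ι_add_mul_swap (R := k)
    (Finsupp.single i (1 : k)) (Finsupp.single j (1 : k))
  exact eq_neg_of_add_eq_zero_left this

lemma basVec_swap3 (i j : ι) (x : ExteriorAlgebra k (ι →₀ k)) :
    basVec k i * (basVec k j * x) = -(basVec k j * (basVec k i * x)) := by
  rw [← mul_assoc, basVec_swap, neg_mul, mul_assoc]

/-- Move a basis vector past a product of four basis vectors. -/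
lemma basVec_pass4 (m c₁ c₂ c₃ c₄ : ι) (x : ExteriorAlgebra k (ι →₀ k)) :
    basVec k m * (basVec k c₁ * (basVec k c₂ * (basVec k c₃ * (basVec k c₄ * x)))) =
      basVec k c₁ * (basVec k c₂ * (basVec k c₃ * (basVec k c₄ * (basVec k m * x)))) := by
  rw [basVec_swap3 k m c₁, basVec_swap3 k m c₂, basVec_swap3 k m c₃, basVec_swap3 k m c₄]
  simp [mul_neg, neg_neg]

lemma basVec_mem {i : ι} {S : Set ι} (hi : i ∈ S) : basVec k i ∈ genSubalgebra k S :=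
  Algebra.subset_adjoin ⟨i, hi, rfl⟩

lemma genSubalgebra_mono {S T : Set ι} (h : S ⊆ T) :
    genSubalgebra k S ≤ genSubalgebra k T :=
  Algebra.adjoin_mono (Set.image_mono h)

set_option maxHeartbeats 1000000 in
open CliffordAlgebra in
lemma contract_adjoin_mul (d : Module.Dual k (ι →₀ k)) (S : Set ι)
    (hS : ∀ j ∈ S, d (Finsupp.single j (1 : k)) = 0)
    {u : ExteriorAlgebra k (ι →₀ k)} (hu : u ∈ genSubalgebra k S)
    (b : ExteriorAlgebra k (ι →₀ k)) :
    contractLeft (Q := (0 : QuadraticForm k (ι →₀ k))) d (u * b) =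
      involute u * contractLeft (Q := (0 : QuadraticForm k (ι →₀ k))) d b := by
  unfold genSubalgebra at hu
  induction hu using Algebra.adjoin_induction generalizing b with
  | mem x hx =>
      obtain ⟨j, hj, rfl⟩ := hx
      show contractLeft (Q := (0 : QuadraticForm k (ι →₀ k))) d
          (CliffordAlgebra.ι (0 : QuadraticForm k (ι →₀ k)) (Finsupp.single j (1 : k)) * b) =
        involute (CliffordAlgebra.ι (0 : QuadraticForm k (ι →₀ k)) (Finsupp.single j (1 : k))) *
          contractLeft (Q := (0 : QuadraticForm k (ι →₀ k))) d b
      rw [contractLeft_ι_mul, hS j hj, zero_smul, zero_sub, involute_ι, neg_mul]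
  | algebraMap r =>
      rw [contractLeft_algebraMap_mul, involute.commutes]
  | add x y hx hy ihx ihy =>
      rw [add_mul, map_add, ihx, ihy, map_add, add_mul]
  | mul x y hx hy ihx ihy =>
      rw [mul_assoc, ihx, ihy, map_mul, mul_assoc]

open CliffordAlgebra in
lemma contract_adjoin_eq_zero (d : Module.Dual k (ι →₀ k)) (S : Set ι)
    (hS : ∀ j ∈ S, d (Finsupp.single j (1 : k)) = 0)
    {u : ExteriorAlgebra k (ι →₀ k)} (hu : u ∈ genSubalgebra k S) :
    contractLeft (Q := (0 : QuadraticForm k (ι →₀ k))) d u = 0 := by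
  have := contract_adjoin_mul k d S hS hu 1
  simpa using this

open CliffordAlgebra in
/-- If `basVec i * u = 0` and `u` lies in the subalgebra generated by indices other
than `i`, then `u = 0`. -/
lemma basVec_peel {i : ι} {S : Set ι} (hiS : i ∉ S)
    {u : ExteriorAlgebra k (ι →₀ k)} (hu : u ∈ genSubalgebra k S)
    (h : basVec k i * u = 0) : u = 0 := by
  set d : Module.Dual k (ι →₀ k) := Finsupp.lapply i with hd
  have hS : ∀ j ∈ S, d (Finsupp.single j (1 : k)) = 0 := by
    intro j hj
    have : j ≠ i := fun e => hiS (e ▸ hj)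
    simp [hd, Finsupp.lapply, Finsupp.single_apply, this]
  have hcontr := congrArg (contractLeft (Q := (0 : QuadraticForm k (ι →₀ k))) d) h
  rw [show basVec k i = CliffordAlgebra.ι (0 : QuadraticForm k (ι →₀ k))
      (Finsupp.single i (1 : k)) from rfl] at hcontr
  rw [contractLeft_ι_mul, contract_adjoin_eq_zero k d S hS hu, mul_zero, sub_zero,
    map_zero] at hcontr
  simpa [hd, Finsupp.lapply] using hcontr

end Aux

set_option maxHeartbeats 4000000 in
theorem double_collapse_orientations_opposite
    (k : Type*) [Field k] {ι : Type*} [DecidableEq ι]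
    (v₁ v₂ h₁ h₂ v₃ v₄ h₃ h₄ we wf : ι)
    (hnodup : ([v₁, v₂, h₁, h₂, v₃, v₄, h₃, h₄, we, wf] : List ι).Nodup)
    -- the remaining vertices and half-edges of the graph
    (X : Set ι) (hX : X = {i | i ∉ ([v₁, v₂, h₁, h₂, v₃, v₄, h₃, h₄, we, wf] : List ι)})
    (ω : ExteriorAlgebra k (ι →₀ k))
    -- collapse of `e` first: `ω = v₁ ∧ v₂ ∧ h₁ ∧ h₂ ∧ y₁`, so `or(Ĝ/e) = w_e ∧ y₁`
    (y₁ : ExteriorAlgebra k (ι →₀ k))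
    (hy₁mem : y₁ ∈ genSubalgebra k ({v₃, v₄, h₃, h₄} ∪ X))
    (hy₁ : ω = basVec k v₁ * basVec k v₂ * basVec k h₁ * basVec k h₂ * y₁)
    -- then collapse of `f`: `or(Ĝ/e) = v₃ ∧ v₄ ∧ h₃ ∧ h₄ ∧ y₂`, so `or(Ĝ/e/f) = w_f ∧ y₂`
    (y₂ : ExteriorAlgebra k (ι →₀ k))
    (hy₂mem : y₂ ∈ genSubalgebra k ({we} ∪ X))
    (hy₂ : basVec k we * y₁ = basVec k v₃ * basVec k v₄ * basVec k h₃ * basVec k h₄ * y₂)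
    -- collapse of `f` first: `ω = v₃ ∧ v₄ ∧ h₃ ∧ h₄ ∧ z₁`, so `or(Ĝ/f) = w_f ∧ z₁`
    (z₁ : ExteriorAlgebra k (ι →₀ k))
    (hz₁mem : z₁ ∈ genSubalgebra k ({v₁, v₂, h₁, h₂} ∪ X))
    (hz₁ : ω = basVec k v₃ * basVec k v₄ * basVec k h₃ * basVec k h₄ * z₁)
    -- then collapse of `e`: `or(Ĝ/f) = v₁ ∧ v₂ ∧ h₁ ∧ h₂ ∧ z₂`, so `or(Ĝ/f/e) = w_e ∧ z₂`
    (z₂ : ExteriorAlgebra k (ι →₀ k))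
    (hz₂mem : z₂ ∈ genSubalgebra k ({wf} ∪ X))
    (hz₂ : basVec k wf * z₁ = basVec k v₁ * basVec k v₂ * basVec k h₁ * basVec k h₂ * z₂) :
    -- the two induced orientations are opposite:
    basVec k wf * y₂ = - (basVec k we * z₂) := by
  classical
  -- right-associate all hypotheses
  simp only [mul_assoc] at hy₁ hy₂ hz₁ hz₂
  -- distinctness facts
  simp only [List.nodup_cons, List.mem_cons, List.mem_singleton, List.not_mem_nil,
    or_false, not_or, List.nodup_nil, and_true] at hnodup
  obtain ⟨⟨n12, n13, n14, n15, n16, n17, n18, n19, n1a⟩,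
    ⟨n23, n24, n25, n26, n27, n28, n29, n2a⟩,
    ⟨n34, n35, n36, n37, n38, n39, n3a⟩,
    ⟨n45, n46, n47, n48, n49, n4a⟩,
    ⟨n56, n57, n58, n59, n5a⟩,
    ⟨n67, n68, n69, n6a⟩,
    ⟨n78, n79, n7a⟩,
    ⟨n89, n8a⟩, n9a⟩ := hnodup
  subst hX
  set w : ExteriorAlgebra k (ι →₀ k) := basVec k wf * y₂ + basVec k we * z₂ with hw
  -- the element `w` lies in any subalgebra containing `we`, `wf` and `X`
  have hwT : ∀ T : Set ι, we ∈ T → wf ∈ T →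
      {i | i ∉ ([v₁, v₂, h₁, h₂, v₃, v₄, h₃, h₄, we, wf] : List ι)} ⊆ T →
      w ∈ genSubalgebra k T := by
    intro T hwe hwf hXT
    exact add_mem
      (mul_mem (basVec_mem k hwf)
        (genSubalgebra_mono k (Set.union_subset (Set.singleton_subset_iff.2 hwe) hXT) hy₂mem))
      (mul_mem (basVec_mem k hwe)
        (genSubalgebra_mono k (Set.union_subset (Set.singleton_subset_iff.2 hwf) hXT) hz₂mem))
  -- the key computation: the full product kills `w`
  have hA : basVec k v₁ * (basVec k v₂ * (basVec k h₁ * (basVec k h₂ *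
      (basVec k v₃ * (basVec k v₄ * (basVec k h₃ * (basVec k h₄ *
      (basVec k wf * y₂)))))))) = basVec k wf * (basVec k we * ω) := by
    rw [← basVec_pass4 k wf v₃ v₄ h₃ h₄ y₂, ← hy₂,
      ← basVec_pass4 k wf v₁ v₂ h₁ h₂ (basVec k we * y₁),
      ← basVec_pass4 k we v₁ v₂ h₁ h₂ y₁, ← hy₁]
  have hB : basVec k v₁ * (basVec k v₂ * (basVec k h₁ * (basVec k h₂ *
      (basVec k v₃ * (basVec k v₄ * (basVec k h₃ * (basVec k h₄ *
      (basVec k we * z₂)))))))) = -(basVec k wf * (basVec k we * ω)) := by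
    rw [basVec_pass4 k h₂ v₃ v₄ h₃ h₄ (basVec k we * z₂),
      basVec_pass4 k h₁ v₃ v₄ h₃ h₄ _,
      basVec_pass4 k v₂ v₃ v₄ h₃ h₄ _,
      basVec_pass4 k v₁ v₃ v₄ h₃ h₄ _,
      ← basVec_pass4 k we v₁ v₂ h₁ h₂ z₂, ← hz₂,
      ← basVec_pass4 k we v₃ v₄ h₃ h₄ (basVec k wf * z₁),
      ← basVec_pass4 k wf v₃ v₄ h₃ h₄ z₁, ← hz₁,
      basVec_swap3 k we wf ω]
  have key : basVec k v₁ * (basVec k v₂ * (basVec k h₁ * (basVec k h₂ *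
      (basVec k v₃ * (basVec k v₄ * (basVec k h₃ * (basVec k h₄ * w))))))) = 0 := by
    rw [hw]
    simp only [mul_add]
    rw [hA, hB, add_neg_cancel]
  -- now peel off the eight basis vectors one by one
  have k1 := basVec_peel k
    (S := ({v₂, h₁, h₂, v₃, v₄, h₃, h₄, we, wf} : Set ι) ∪
      {i | i ∉ ([v₁, v₂, h₁, h₂, v₃, v₄, h₃, h₄, we, wf] : List ι)}) (i := v₁)
    (by simp [n12, n13, n14, n15, n16, n17, n18, n19, n1a])
    (mul_mem (basVec_mem k (by simp)) (mul_mem (basVec_mem k (by simp))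
      (mul_mem (basVec_mem k (by simp)) (mul_mem (basVec_mem k (by simp))
      (mul_mem (basVec_mem k (by simp)) (mul_mem (basVec_mem k (by simp))
      (mul_mem (basVec_mem k (by simp))
        (hwT _ (by simp) (by simp) Set.subset_union_right)))))))) key
  have k2 := basVec_peel k
    (S := ({h₁, h₂, v₃, v₄, h₃, h₄, we, wf} : Set ι) ∪
      {i | i ∉ ([v₁, v₂, h₁, h₂, v₃, v₄, h₃, h₄, we, wf] : List ι)}) (i := v₂)
    (by simp [n23, n24, n25, n26, n27, n28, n29, n2a])
    (mul_mem (basVec_mem k (by simp)) (mul_mem (basVec_mem k (by simp))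
      (mul_mem (basVec_mem k (by simp)) (mul_mem (basVec_mem k (by simp))
      (mul_mem (basVec_mem k (by simp)) (mul_mem (basVec_mem k (by simp))
        (hwT _ (by simp) (by simp) Set.subset_union_right))))))) k1
  have k3 := basVec_peel k
    (S := ({h₂, v₃, v₄, h₃, h₄, we, wf} : Set ι) ∪
      {i | i ∉ ([v₁, v₂, h₁, h₂, v₃, v₄, h₃, h₄, we, wf] : List ι)}) (i := h₁)
    (by simp [n34, n35, n36, n37, n38, n39, n3a])
    (mul_mem (basVec_mem k (by simp)) (mul_mem (basVec_mem k (by simp))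
      (mul_mem (basVec_mem k (by simp)) (mul_mem (basVec_mem k (by simp))
      (mul_mem (basVec_mem k (by simp))
        (hwT _ (by simp) (by simp) Set.subset_union_right)))))) k2
  have k4 := basVec_peel k
    (S := ({v₃, v₄, h₃, h₄, we, wf} : Set ι) ∪
      {i | i ∉ ([v₁, v₂, h₁, h₂, v₃, v₄, h₃, h₄, we, wf] : List ι)}) (i := h₂)
    (by simp [n45, n46, n47, n48, n49, n4a])
    (mul_mem (basVec_mem k (by simp)) (mul_mem (basVec_mem k (by simp))
      (mul_mem (basVec_mem k (by simp)) (mul_mem (basVec_mem k (by simp))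
        (hwT _ (by simp) (by simp) Set.subset_union_right))))) k3
  have k5 := basVec_peel k
    (S := ({v₄, h₃, h₄, we, wf} : Set ι) ∪
      {i | i ∉ ([v₁, v₂, h₁, h₂, v₃, v₄, h₃, h₄, we, wf] : List ι)}) (i := v₃)
    (by simp [n56, n57, n58, n59, n5a])
    (mul_mem (basVec_mem k (by simp)) (mul_mem (basVec_mem k (by simp))
      (mul_mem (basVec_mem k (by simp))
        (hwT _ (by simp) (by simp) Set.subset_union_right)))) k4
  have k6 := basVec_peel k
    (S := ({h₃, h₄, we, wf} : Set ι) ∪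
      {i | i ∉ ([v₁, v₂, h₁, h₂, v₃, v₄, h₃, h₄, we, wf] : List ι)}) (i := v₄)
    (by simp [n67, n68, n69, n6a])
    (mul_mem (basVec_mem k (by simp)) (mul_mem (basVec_mem k (by simp))
      (hwT _ (by simp) (by simp) Set.subset_union_right))) k5
  have k7 := basVec_peel k
    (S := ({h₄, we, wf} : Set ι) ∪
      {i | i ∉ ([v₁, v₂, h₁, h₂, v₃, v₄, h₃, h₄, we, wf] : List ι)}) (i := h₃)
    (by simp [n78, n79, n7a])
    (mul_mem (basVec_mem k (by simp))
      (hwT _ (by simp) (by simp) Set.subset_union_right)) k6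
  have k8 := basVec_peel k
    (S := ({we, wf} : Set ι) ∪
      {i | i ∉ ([v₁, v₂, h₁, h₂, v₃, v₄, h₃, h₄, we, wf] : List ι)}) (i := h₄)
    (by simp [n89, n8a])
    (hwT _ (by simp) (by simp) Set.subset_union_right) k7
  rw [hw] at k8
  exact eq_neg_of_add_eq_zero_left k8
end
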